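/- Let A₁, A₂, A₃ ∈ B(H) with A₁, A₂ positive and the block operator [[A₁, A₃*],[A₃, A₂]] positive on H ⊕ H. Then for any unit vector u, any r ≥ 1 and conjugate exponents γ, δ > 1 with 1/γ + 1/δ = 1, |⟨A₃u,u⟩|^(2r) ≤ ⟨(A₁^(rγ)/γ + A₂^(rδ)/δ) u, u⟩. -/

import Mathlib

open scoped InnerProductSpace ComplexOrder
open ContinuousLinearMap

open scoped NNReal in
set_option maxHeartbeats 1000000 in
private theorem stmt_17_mccarthy {H : Type*} [NormedAddCommGroup H] [InnerProductSpace ℂ H]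
    [CompleteSpace H] (A : H →L[ℂ] H) (hA : 0 ≤ A) (p : ℝ) (hp : 1 ≤ p)
    (u : H) (hu : ‖u‖ = 1) :
    (⟪A u, u⟫_ℂ).re ^ p ≤ (⟪(A ^ p) u, u⟫_ℂ).re := by
  set a : ℝ := (⟪A u, u⟫_ℂ).re with ha_def
  have hApos : 0 ≤ (A ^ p) := CFC.rpow_nonneg
  have ha0 : 0 ≤ a := ((nonneg_iff_isPositive A).mp hA).re_inner_nonneg_left u
  have hup : 0 < p := lt_of_lt_of_le one_pos hp
  rcases eq_or_lt_of_le ha0 with h0 | hapos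
  · rw [← h0, Real.zero_rpow hup.ne']
    exact ((nonneg_iff_isPositive _).mp hApos).re_inner_nonneg_left u
  have hap : a ^ p = a * a ^ (p - 1) := by
    have h1 : (1 : ℝ) + (p - 1) = p := by ring
    rw [← h1, Real.rpow_one_add' ha0 (by rw [h1]; exact hup.ne')]
    norm_num
  have hrw : A ^ p = cfc (fun x : ℝ => x ^ p) A := by
    have h0 : A ^ p = cfc (fun x : ℝ≥0 => x ^ p) A := rfl
    rw [h0, cfc_nnreal_eq_real _ _ hA]
    apply cfc_congr
    intro x hx
    have hx0 : 0 ≤ x := spectrum_nonneg_of_nonneg hA hx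
    simp [NNReal.coe_rpow, Real.coe_toNNReal x hx0]
  have hcont : ContinuousOn (fun x : ℝ => x ^ p) (spectrum ℝ A) :=
    fun x hx => (Real.continuousAt_rpow_const x p (Or.inr hup.le)).continuousWithinAt
  have hle : cfc (fun x : ℝ => (a ^ p - p * a ^ (p-1) * a) + p * a ^ (p-1) * x) A ≤ A ^ p := by
    rw [hrw]
    apply cfc_mono ?_ (by fun_prop) hcont
    intro x hx
    have hx0 : 0 ≤ x := spectrum_nonneg_of_nonneg hA hx
    have hxa : 0 ≤ x / a := by positivity
    have hber := one_add_mul_self_le_rpow_one_add (s := x / a - 1) (p := p)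
      (by linarith) hp
    rw [add_sub_cancel, Real.div_rpow hx0 ha0] at hber
    have h3 : (1 + p * (x / a - 1)) * a ^ p ≤ x ^ p :=
      (le_div_iff₀ (Real.rpow_pos_of_pos hapos p)).mp hber
    calc (a ^ p - p * a ^ (p-1) * a) + p * a ^ (p-1) * x
        = (1 + p * (x / a - 1)) * a ^ p := by
          rw [hap]; field_simp; ring
      _ ≤ x ^ p := h3
  have hcfc : cfc (fun x : ℝ => (a ^ p - p * a ^ (p-1) * a) + p * a ^ (p-1) * x) A
      = (a ^ p - p * a ^ (p-1) * a) • (1 : H →L[ℂ] H) + (p * a ^ (p-1)) • A := by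
    rw [cfc_const_add (R := ℝ) _ _ A (by fun_prop), Algebra.algebraMap_eq_smul_one]
    congr 1
    rw [show (HMul.hMul (p * a ^ (p-1)) : ℝ → ℝ) = fun x => (p * a ^ (p-1)) * id x from rfl,
      cfc_const_mul (R := ℝ) _ id A (by fun_prop), cfc_id ℝ A]
  rw [hcfc] at hle
  have hpos := (nonneg_iff_isPositive _).mp (sub_nonneg.mpr hle)
  have h5 := hpos.re_inner_nonneg_left u
  have he : ∀ (c : ℝ) (T : H →L[ℂ] H), (⟪(c • T) u, u⟫_ℂ).re = c * (⟪T u, u⟫_ℂ).re := by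
    intro c T
    rw [smul_apply, RCLike.real_smul_eq_coe_smul (K := ℂ), inner_smul_left]
    simp [RCLike.re_ofReal_mul]
  rw [sub_apply, inner_sub_left, map_sub, sub_nonneg, add_apply, inner_add_left, map_add] at h5
  simp only [RCLike.re_to_complex] at h5
  rw [he, he] at h5
  have hnorm : (⟪(1 : H →L[ℂ] H) u, u⟫_ℂ).re = 1 := by
    rw [ContinuousLinearMap.one_apply, ← RCLike.re_to_complex, inner_self_eq_norm_sq, hu, one_pow]
  calc a ^ p = (a ^ p - p * a ^ (p-1) * a) * 1 + (p * a ^ (p-1)) * a := by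
        rw [hap]; ring
    _ ≤ (⟪(A ^ p) u, u⟫_ℂ).re := by
        rw [hnorm] at h5; exact h5

private theorem stmt_17_cs {H : Type*} [NormedAddCommGroup H] [InnerProductSpace ℂ H]
    [CompleteSpace H] (A₁ A₂ A₃ : H →L[ℂ] H)
    (hA₁ : 0 ≤ A₁) (hA₂ : 0 ≤ A₂)
    (hblock : ∀ u v : H,
      0 ≤ ⟪A₁ u + adjoint A₃ v, u⟫_ℂ + ⟪A₃ u + A₂ v, v⟫_ℂ) (u : H) :
    ‖⟪A₃ u, u⟫_ℂ‖ ^ 2 ≤ (⟪A₁ u, u⟫_ℂ).re * (⟪A₂ u, u⟫_ℂ).re := by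
  set c := ⟪A₃ u, u⟫_ℂ with hc_def
  have ha0 : 0 ≤ (⟪A₁ u, u⟫_ℂ).re := ((nonneg_iff_isPositive A₁).mp hA₁).re_inner_nonneg_left u
  have hb0 : 0 ≤ (⟪A₂ u, u⟫_ℂ).re := ((nonneg_iff_isPositive A₂).mp hA₂).re_inner_nonneg_left u
  by_cases hc : c = 0
  · rw [hc]; simpa using mul_nonneg ha0 hb0
  have hcn : (0:ℝ) < ‖c‖ := norm_pos_iff.mpr hc
  have hcc : (starRingEnd ℂ) c * c = ((‖c‖ ^ 2 : ℝ) : ℂ) := by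
    rw [mul_comm, Complex.mul_conj]
    norm_cast
    simp [Complex.sq_norm]
  have hcn' : ((‖c‖ : ℝ) : ℂ) ≠ 0 := by exact_mod_cast hcn.ne'
  have key : ∀ s : ℝ, 0 ≤ (⟪A₂ u, u⟫_ℂ).re * (s * s) + (-(2 * ‖c‖)) * s + (⟪A₁ u, u⟫_ℂ).re := by
    intro s
    set t : ℂ := (-s : ℂ) * (starRingEnd ℂ) c / ‖c‖ with ht_def
    have h := hblock u (t • u)
    have hexp : ⟪A₁ u + adjoint A₃ (t • u), u⟫_ℂ + ⟪A₃ u + A₂ (t • u), t • u⟫_ℂ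
        = ⟪A₁ u, u⟫_ℂ + ((starRingEnd ℂ) t * (starRingEnd ℂ) c + t * c)
          + ((starRingEnd ℂ) t * t) * ⟪A₂ u, u⟫_ℂ := by
      simp only [map_smul, inner_add_left, inner_smul_left, inner_smul_right,
        adjoint_inner_left, ← inner_conj_symm u (A₃ u), ← hc_def]
      ring
    rw [hexp] at h
    have h1 : t * c = ((-(s * ‖c‖) : ℝ) : ℂ) := by
      calc t * c = (-s : ℂ) * ((starRingEnd ℂ) c * c) / ‖c‖ := by rw [ht_def]; ring
        _ = (-s : ℂ) * ((‖c‖ ^ 2 : ℝ) : ℂ) / ‖c‖ := by rw [hcc]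
        _ = ((-(s * ‖c‖) : ℝ) : ℂ) := by
            rw [div_eq_iff hcn']
            push_cast
            ring
    have h2 : (starRingEnd ℂ) t * (starRingEnd ℂ) c = ((-(s * ‖c‖) : ℝ) : ℂ) := by
      rw [← map_mul, h1, Complex.conj_ofReal]
    have h3 : (starRingEnd ℂ) t * t = ((s ^ 2 : ℝ) : ℂ) := by
      calc (starRingEnd ℂ) t * t
          = (s : ℂ) ^ 2 * ((starRingEnd ℂ) c * c) / ((‖c‖ : ℂ) * ‖c‖) := by
            rw [ht_def]
            simp only [map_div₀, map_mul, map_neg, Complex.conj_conj, Complex.conj_ofReal]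
            ring
        _ = ((s ^ 2 : ℝ) : ℂ) := by
            rw [hcc, div_eq_iff (mul_ne_zero hcn' hcn')]
            push_cast
            ring
    rw [h1, h2, h3] at h
    have hre := (Complex.le_def.mp h).1
    simp only [Complex.add_re, Complex.zero_re, Complex.ofReal_re, Complex.re_ofReal_mul] at hre
    nlinarith [hre]
  have hd := discrim_le_zero key
  rw [discrim] at hd
  nlinarith [hd]

theorem stmt_17 {H : Type*} [NormedAddCommGroup H] [InnerProductSpace ℂ H]
    [CompleteSpace H] (A₁ A₂ A₃ : H →L[ℂ] H)
    (hA₁ : 0 ≤ A₁) (hA₂ : 0 ≤ A₂)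
    (hblock : ∀ u v : H,
      0 ≤ ⟪A₁ u + adjoint A₃ v, u⟫_ℂ + ⟪A₃ u + A₂ v, v⟫_ℂ)
    (r γ δ : ℝ) (hr : 1 ≤ r) (hγ : 1 < γ) (hδ : 1 < δ)
    (hconj : 1 / γ + 1 / δ = 1) (u : H) (hu : ‖u‖ = 1) :
    ‖⟪A₃ u, u⟫_ℂ‖ ^ (2 * r) ≤
      (⟪(((γ : ℂ))⁻¹ • (A₁ ^ (r * γ)) + ((δ : ℂ))⁻¹ • (A₂ ^ (r * δ))) u,
        u⟫_ℂ).re := by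
  have hγ0 : (0:ℝ) < γ := lt_trans one_pos hγ
  have hδ0 : (0:ℝ) < δ := lt_trans one_pos hδ
  have hr0 : (0:ℝ) < r := lt_of_lt_of_le one_pos hr
  have hcs2 := stmt_17_cs A₁ A₂ A₃ hA₁ hA₂ hblock u
  have hm1 := stmt_17_mccarthy A₁ hA₁ (r * γ) (by nlinarith) u hu
  have hm2 := stmt_17_mccarthy A₂ hA₂ (r * δ) (by nlinarith) u hu
  set n := ‖⟪A₃ u, u⟫_ℂ‖
  set a := (⟪A₁ u, u⟫_ℂ).re with ha_def
  set b := (⟪A₂ u, u⟫_ℂ).re with hb_def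
  set X := (⟪(A₁ ^ (r*γ)) u, u⟫_ℂ).re with hX_def
  set Y := (⟪(A₂ ^ (r*δ)) u, u⟫_ℂ).re with hY_def
  have ha0 : 0 ≤ a := ((nonneg_iff_isPositive A₁).mp hA₁).re_inner_nonneg_left u
  have hb0 : 0 ≤ b := ((nonneg_iff_isPositive A₂).mp hA₂).re_inner_nonneg_left u
  have hX0 : 0 ≤ X := le_trans (Real.rpow_nonneg ha0 _) hm1
  have hY0 : 0 ≤ Y := le_trans (Real.rpow_nonneg hb0 _) hm2
  have hRHS : (⟪(((γ : ℂ))⁻¹ • (A₁ ^ (r * γ)) + ((δ : ℂ))⁻¹ • (A₂ ^ (r * δ))) u,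
        u⟫_ℂ).re = γ⁻¹ * X + δ⁻¹ * Y := by
    simp only [add_apply, smul_apply, inner_add_left, inner_smul_left, map_inv₀,
      Complex.conj_ofReal, Complex.add_re, ← Complex.ofReal_inv, Complex.re_ofReal_mul]
    rfl
  rw [hRHS]
  have step1 : n ^ (2 * r) ≤ (a * b) ^ r := by
    have h1 : n ^ (2 * r) = (n ^ 2) ^ r := by
      rw [← Real.rpow_natCast n 2, ← Real.rpow_mul (norm_nonneg _)]
      simp only [Nat.cast_ofNat]
      rfl
    rw [h1]
    exact Real.rpow_le_rpow (sq_nonneg n) hcs2 hr0.le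
  have step2 : (a * b) ^ r ≤ X ^ γ⁻¹ * Y ^ δ⁻¹ := by
    have h2 : (a * b) ^ r = (a ^ (r*γ)) ^ γ⁻¹ * (b ^ (r*δ)) ^ δ⁻¹ := by
      rw [← Real.rpow_mul ha0, ← Real.rpow_mul hb0, Real.mul_rpow ha0 hb0]
      rw [mul_assoc, mul_inv_cancel₀ hγ0.ne', mul_one, mul_assoc,
        mul_inv_cancel₀ hδ0.ne', mul_one]
    rw [h2]
    exact mul_le_mul (Real.rpow_le_rpow (Real.rpow_nonneg ha0 _) hm1 (by positivity))
      (Real.rpow_le_rpow (Real.rpow_nonneg hb0 _) hm2 (by positivity))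
      (Real.rpow_nonneg (Real.rpow_nonneg hb0 _) _) (Real.rpow_nonneg hX0 _)
  have step3 : X ^ γ⁻¹ * Y ^ δ⁻¹ ≤ γ⁻¹ * X + δ⁻¹ * Y := by
    have hyoung := Real.young_inequality_of_nonneg (Real.rpow_nonneg hX0 γ⁻¹)
      (Real.rpow_nonneg hY0 δ⁻¹) (Real.holderConjugate_iff.mpr ⟨hγ, by simpa [one_div] using hconj⟩)
    rw [Real.rpow_inv_rpow hX0 hγ0.ne', Real.rpow_inv_rpow hY0 hδ0.ne'] at hyoung
    calc X ^ γ⁻¹ * Y ^ δ⁻¹ ≤ X / γ + Y / δ := hyoung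
      _ = γ⁻¹ * X + δ⁻¹ * Y := by rw [div_eq_inv_mul, div_eq_inv_mul]
  linarith
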